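/- Let X be a 2-neighbourly simplicial complex of dimension d over a field F. Then for every 0 ≤ j ≤ d: (a) ∑_{i=0}^{j} (−1)^{j−i} μ_i ≥ ∑_{i=0}^{j} (−1)^{j−i} β_i, with equality when j = d; and (b) μ_j ≥ β_j. -/

import Mathlib

open Finset

/-- An abstract simplicial complex on vertex type `V` (faces include `∅` when nonempty). -/
structure SC (V : Type) where
  faces : Finset (Finset V)
  down_closed : ∀ s ∈ faces, ∀ t, t ⊆ s → t ∈ faces

namespace SC

variable {V : Type} [LinearOrder V] (F : Type) [Field F]

/-- The vertex set. -/
def verts (K : SC V) : Finset V := K.faces.sup id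

/-- The faces of cardinality `n` (i.e. of dimension `n-1`). -/
def cf (K : SC V) (n : ℕ) : Finset (Finset V) :=
  K.faces.filter fun s => s.card = n

/-- The induced subcomplex on a vertex set `A`. -/
def ind (K : SC V) (A : Finset V) : SC V where
  faces := K.faces.filter fun s => s ⊆ A
  down_closed := by
    intro s hs t hts
    simp only [mem_filter] at hs ⊢
    exact ⟨K.down_closed s hs.1 t hts, hts.trans hs.2⟩

/-- The link of a vertex `x`. -/
def lk (K : SC V) (x : V) : SC V where
  faces := (K.faces.filter fun s => x ∈ s).image fun s => s.erase x
  down_closed := by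
    intro s hs t hts
    simp only [mem_image, mem_filter] at hs ⊢
    obtain ⟨u, ⟨hu, hxu⟩, rfl⟩ := hs
    have hxt : x ∉ t := fun hx => (Finset.notMem_erase x u) (hts hx)
    refine ⟨insert x t, ⟨K.down_closed u hu _ ?_, mem_insert_self _ _⟩,
      by rw [Finset.erase_insert hxt]⟩
    intro y hy
    rcases Finset.mem_insert.1 hy with rfl | hy
    · exact hxu
    · exact (Finset.erase_subset x u) (hts hy)

/-- Union of two complexes. -/
def union (K L : SC V) : SC V where
  faces := K.faces ∪ L.faces
  down_closed := by
    intro s hs t hts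
    rcases Finset.mem_union.1 hs with h | h
    · exact Finset.mem_union.2 (Or.inl (K.down_closed s h t hts))
    · exact Finset.mem_union.2 (Or.inr (L.down_closed s h t hts))

/-- Intersection of two complexes. -/
def inter (K L : SC V) : SC V where
  faces := K.faces ∩ L.faces
  down_closed := by
    intro s hs t hts
    have h := Finset.mem_inter.1 hs
    exact Finset.mem_inter.2 ⟨K.down_closed s h.1 t hts, L.down_closed s h.2 t hts⟩

/-- The orientation sign with which the face `t` occurs in the boundary of the face `s`
(using the linear order on the vertices to orient the simplices). -/
def coeff (s t : Finset V) : F :=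
  if t ⊆ s then ∑ v ∈ s \ t, (-1 : F) ^ (t.filter (· < v)).card else 0

/-- A generic boundary-type linear map between chain groups spanned by
two finite collections of faces. -/
noncomputable def bd (A B : Finset (Finset V)) :
    ({s // s ∈ A} → F) →ₗ[F] ({s // s ∈ B} → F) where
  toFun f := fun t => ∑ s : {s // s ∈ A}, coeff F s.1 t.1 * f s
  map_add' f g := by
    funext t
    simp [mul_add, Finset.sum_add_distrib]
  map_smul' c f := by
    funext t
    simp only [Pi.smul_apply, smul_eq_mul, RingHom.id_apply, Finset.mul_sum]
    exact Finset.sum_congr rfl fun s _ => by ring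

/-- The group of simplicial `n`-chains of `K` with coefficients in `F`. -/
abbrev Ch (K : SC V) (n : ℕ) : Type := {s // s ∈ K.cf (n + 1)} → F

/-- The simplicial boundary operator from degree `n` to degree `n-1`
(the zero map in degree `0`). -/
noncomputable def D (K : SC V) : (n : ℕ) → Ch F K n →ₗ[F] Ch F K (n - 1)
  | 0 => 0
  | (n + 1) => bd F (K.cf (n + 2)) (K.cf (n + 1))

/-- The `n`-th Betti number of `K` over `F` :
`dim ker ∂ₙ - dim im ∂ₙ₊₁` (an integer). -/
noncomputable def betti (K : SC V) (n : ℕ) : ℤ :=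
  (Module.finrank F (LinearMap.ker (D F K n)) : ℤ) -
    (Module.finrank F (LinearMap.range (D F K (n + 1))) : ℤ)

/-- The `n`-th reduced Betti number of `K` over `F`.  (With this convention the
reduced Betti number in degree `0` of the trivial complex `{∅}` is `-1`.) -/
noncomputable def rbetti (K : SC V) (n : ℕ) : ℤ :=
  betti F K n - if n = 0 then 1 else 0

/-- The sigma-vector of `K`:  a weighted average of the reduced Betti numbers of the
induced subcomplexes of `K`. -/
noncomputable def sigma (K : SC V) (i : ℕ) : ℚ :=
  ∑ j ∈ Finset.range (K.verts.card + 1),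
    (1 / (K.verts.card.choose j : ℚ)) *
      ∑ A ∈ K.verts.powersetCard j, (rbetti F (K.ind A) i : ℚ)

/-- The mu-vector of `K`:  `μ₀ = 1` and
`μᵢ = δ_{i1} + (1/m) ∑_{x ∈ V(K)} σ_{i-1}(lk_K x)` for `i ≥ 1`. -/
noncomputable def mu (K : SC V) (i : ℕ) : ℚ :=
  if i = 0 then 1
  else (if i = 1 then 1 else 0) +
    (1 / (K.verts.card : ℚ)) * ∑ x ∈ K.verts, sigma F (K.lk x) (i - 1)

/-- `K` has dimension exactly `d`. -/
def dimIs (K : SC V) (d : ℕ) : Prop :=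
  (∃ s ∈ K.faces, s.card = d + 1) ∧ ∀ s ∈ K.faces, s.card ≤ d + 1

/-- `K` has the reduced homology of the `d`-sphere over `F`. -/
def sphereBetti (K : SC V) (d : ℕ) : Prop :=
  ∀ i, rbetti F K i = if i = d then 1 else 0

/-- A triangulated `F`-homology `d`-sphere:  it has the homology of `S^d`, and
(recursively) all its vertex links are homology `(d-1)`-spheres. -/
def IsHomologySphere : (d : ℕ) → SC V → Prop
  | 0, K => dimIs K 0 ∧ sphereBetti F K 0
  | (d + 1), K => dimIs K (d + 1) ∧ sphereBetti F K (d + 1) ∧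
      ∀ x ∈ K.verts, IsHomologySphere d (K.lk x)

/-- A triangulated closed `d`-manifold: all vertex links are homology `(d-1)`-spheres
(for `d = 0`, all vertex links are the trivial complex `{∅}`). -/
def IsClosedManifold : (d : ℕ) → SC V → Prop
  | 0, K => dimIs K 0 ∧ ∀ x ∈ K.verts, (K.lk x).faces = {∅}
  | (d + 1), K => dimIs K (d + 1) ∧ ∀ x ∈ K.verts, IsHomologySphere F d (K.lk x)

/-- Connectedness: nonempty, and any two vertices are joined by a path of edges. -/
def Connected (K : SC V) : Prop :=
  K.verts.Nonempty ∧ ∀ x ∈ K.verts, ∀ y ∈ K.verts,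
    Relation.ReflTransGen (fun a b => ({a, b} : Finset V) ∈ K.faces) x y

/-- `K` is `l`-neighbourly: every `l` vertices of `K` form a face. -/
def Neighbourly (K : SC V) (l : ℕ) : Prop :=
  ∀ A ⊆ K.verts, A.card = l → A ∈ K.faces

/-- The inclusion-induced map on chains (for `K` a subcomplex of `L`). -/
noncomputable def inclCh (K L : SC V) (n : ℕ) (f : Ch F K n) : Ch F L n :=
  fun s => if h : s.1 ∈ K.cf (n + 1) then f ⟨s.1, h⟩ else 0

/-- The inclusion-induced morphism `H_j(K; F) → H_j(L; F)` is injective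
(for `K` a subcomplex of `L`):  every `j`-cycle of `K` which bounds in `L`
already bounds in `K`. -/
def HomInj (K L : SC V) (j : ℕ) : Prop :=
  ∀ z : Ch F K j, D F K j z = 0 →
    (∃ w, D F L (j + 1) w = inclCh F K L j z) → ∃ w, D F K (j + 1) w = z

/-- `K` is `F`-tight: connected, and all inclusion-induced maps on homology from
induced subcomplexes are injective. -/
def IsTight (K : SC V) : Prop :=
  K.Connected ∧ ∀ A ⊆ K.verts, ∀ j, HomInj F (K.ind A) K j

/-- The faces of cardinality `n` of `K` not lying in the subcomplex `L`:
a basis of the relative chain group in dimension `n-1`. -/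
def rcf (K L : SC V) (n : ℕ) : Finset (Finset V) :=
  (K.cf n).filter fun s => s ∉ L.faces

/-- Relative chains of the pair `(K, L)`. -/
abbrev RelCh (K L : SC V) (n : ℕ) : Type := {s // s ∈ K.rcf L (n + 1)} → F

/-- The boundary operator of the relative chain complex of the pair `(K, L)`. -/
noncomputable def relD (K L : SC V) : (n : ℕ) → RelCh F K L n →ₗ[F] RelCh F K L (n - 1)
  | 0 => 0
  | (n + 1) => bd F (K.rcf L (n + 2)) (K.rcf L (n + 1))

/-- The `n`-th relative Betti number `dim H_n(K, L; F)` of the pair `(K, L)`. -/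
noncomputable def relBetti (K L : SC V) (n : ℕ) : ℤ :=
  (Module.finrank F (LinearMap.ker (relD F K L n)) : ℤ) -
    (Module.finrank F (LinearMap.range (relD F K L (n + 1))) : ℤ)

/-- The standard `d`-sphere `S^d_{d+2}`: the boundary of a `(d+1)`-simplex. -/
def IsStdSphere (d : ℕ) (K : SC V) : Prop :=
  ∃ W : Finset V, W.card = d + 2 ∧ ∀ s : Finset V, s ∈ K.faces ↔ s ⊆ W ∧ s ≠ W

/-- `Y` is obtained from the `d`-dimensional complex `X` by the bistellar move
`α ↦ β` of index `i`. -/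
def BMove (d i : ℕ) (X Y : SC V) : Prop :=
  ∃ α β : Finset V, Disjoint α β ∧ α.card + i = d + 1 ∧ β.card = i + 1 ∧
    (∀ γ, γ ⊆ α ∪ β → (γ ∈ X.faces ↔ ¬ β ⊆ γ)) ∧
    (∀ γ : Finset V, γ ∈ Y.faces ↔
      ((γ ∈ X.faces ∧ ¬ (γ ⊆ α ∪ β ∧ ¬ β ⊆ γ)) ∨ (γ ⊆ α ∪ β ∧ ¬ α ⊆ γ)))

/-- `S` is a `k`-stellated `d`-sphere: obtainable from the standard `d`-sphere
by a finite sequence of bistellar moves, each of index `< k`. -/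
def IsKStellated (k d : ℕ) (S : SC V) : Prop :=
  ∃ S₀ : SC V, IsStdSphere d S₀ ∧
    Relation.ReflTransGen (fun X Y => ∃ i, i < k ∧ BMove d i X Y) S₀ S

/-- The geometric realization of `K`, as a subspace of `V → ℝ`. -/
def space (K : SC V) : Set (V → ℝ) :=
  {f | (∀ v, 0 ≤ f v) ∧ ∃ s ∈ K.faces, (∀ v, f v ≠ 0 ↔ v ∈ s) ∧ ∑ v ∈ s, f v = 1}

/-- `K` is a triangulated `e`-ball: its geometric realization is homeomorphic to
the closed unit ball of `ℝᵉ`. -/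
def IsBall (e : ℕ) (K : SC V) : Prop :=
  Nonempty (K.space ≃ₜ (Metric.closedBall (0 : EuclideanSpace ℝ (Fin e)) 1))

/-- `K` is a triangulated `(e-1)`-sphere: its geometric realization is homeomorphic
to the unit sphere of `ℝᵉ` (which is empty, `S^{-1}`, when `e = 0`). -/
def IsSphereDim (e : ℕ) (K : SC V) : Prop :=
  Nonempty (K.space ≃ₜ (Metric.sphere (0 : EuclideanSpace ℝ (Fin e)) 1))

end SC

/-!
Add the vertices of `X` one at a time in a uniformly random order. If `x` arrives after the set
`B`, then, because `X` is 2-neighbourly, `lk x` restricted to `B` has vertex set `B`, and coning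
with `x` identifies its (augmented) chain complex with the relative chain complex of
`(X[B ∪ {x}], X[B])` shifted up by one. Hence `μᵢ` is the expected value of
`∑ₓ dim Hᵢ(X[B ∪ {x}], X[B])`.

Along any order, the relative face numbers add up to the face numbers of `X`, while the relative
boundary ranks are bounded by the increments of the boundary ranks of the induced subcomplexes:
the boundary map of `X[B ∪ {x}]` is block triangular, with diagonal blocks the boundary maps of
`X[B]` and of the pair. Since an alternating sum of Betti numbers is the alternating sum of face
numbers minus the next boundary rank, the strong inequalities follow; in degree `d + 1` all those
ranks vanish, which gives the equality, and the weak inequalities follow from two consecutive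
strong ones.
-/

def Finset.inclusion {α : Type*} {A₁ A : Finset α} (h : A₁ ⊆ A) : A₁ → A := fun s => ⟨s.1, h s.2⟩

theorem Finset.inclusion_injective {α : Type*} {A₁ A : Finset α} (h : A₁ ⊆ A) :
    Function.Injective (Finset.inclusion h) := fun _ _ hst =>
  Subtype.ext (congrArg Subtype.val hst :)

theorem Finset.card_filter_lt_insert {α : Type*} [LinearOrder α] {v x : α} {t : Finset α}
    (hv : v ∉ t) : #((insert v t).filter (· < x)) = #(t.filter (· < x)) + if v < x then 1 else 0 := by
  rw [filter_insert]
  split_ifs with h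
  · exact card_insert_of_notMem fun hv' => hv (mem_filter.1 hv').1
  · rfl

theorem Finset.sum_sum_powersetCard_erase {α M : Type*} [DecidableEq α] [AddCommMonoid M]
    (s : Finset α) (t : ℕ) (g : Finset α → M) :
    ∑ x ∈ s, ∑ B ∈ powersetCard t (s.erase x), g B = (#s - t) • ∑ B ∈ powersetCard t s, g B := by
  rw [Finset.sum_comm' (t' := powersetCard t s) (s' := fun B => s \ B)
    (fun x B => by simp only [mem_powersetCard, subset_erase, mem_sdiff]; tauto), smul_sum]
  refine sum_congr rfl fun B hB => ?_
  rw [sum_const, card_sdiff_of_subset (mem_powersetCard.1 hB).1, (mem_powersetCard.1 hB).2]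

theorem Finset.sum_sum_powersetCard_erase_insert {α M : Type*} [DecidableEq α] [AddCommMonoid M]
    (s : Finset α) (t : ℕ) (g : Finset α → M) :
    ∑ x ∈ s, ∑ B ∈ powersetCard t (s.erase x), g (insert x B) =
      (t + 1) • ∑ A ∈ powersetCard (t + 1) s, g A := by
  have h_insert : ∀ x ∈ s, ∑ B ∈ powersetCard t (s.erase x), g (insert x B) =
      ∑ A ∈ (powersetCard (t + 1) s).filter (x ∈ ·), g A := fun x hx => by
    refine sum_nbij' (insert x) (erase · x) (fun B hB => ?_) (fun A hA => ?_)
      (fun B hB => ?_) (fun A hA => ?_) fun _ _ => rfl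
    · simp only [mem_powersetCard, subset_erase, mem_filter] at hB ⊢
      exact ⟨⟨insert_subset hx hB.1.1, by rw [card_insert_of_notMem hB.1.2, hB.2]⟩,
        mem_insert_self x B⟩
    · simp only [mem_powersetCard, subset_erase, mem_filter] at hA ⊢
      exact ⟨⟨(erase_subset x A).trans hA.1.1, notMem_erase x A⟩,
        by rw [card_erase_of_mem hA.2, hA.1.2]; rfl⟩
    · exact erase_insert (subset_erase.1 (mem_powersetCard.1 hB).1).2
    · exact insert_erase (mem_filter.1 hA).2
  rw [sum_congr rfl h_insert, Finset.sum_comm' (t' := powersetCard (t + 1) s) (s' := id)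
    (fun x A => by simp only [mem_filter, mem_powersetCard, id]; grind), smul_sum]
  refine sum_congr rfl fun A hA => ?_
  rw [id, sum_const, (mem_powersetCard.1 hA).2]

theorem Finset.sum_sum_powersetCard_erase_insert_sub {α : Type*} [DecidableEq α] (s : Finset α)
    (φ : Finset α → ℚ) {t : ℕ} (ht : t < #s) :
    (∑ x ∈ s, ∑ B ∈ powersetCard t (s.erase x), (φ (insert x B) - φ B)) /
        (#s * (#s - 1).choose t) =
      (∑ A ∈ powersetCard (t + 1) s, φ A) / (#s).choose (t + 1) -
        (∑ A ∈ powersetCard t s, φ A) / (#s).choose t := by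
  have h₁ : (#s * (#s - 1).choose t : ℚ) = (#s).choose (t + 1) * (t + 1 : ℕ) := by
    exact_mod_cast Nat.sub_add_cancel (t.zero_le.trans_lt ht) ▸ Nat.add_one_mul_choose_eq _ t
  have h₂ : (#s * (#s - 1).choose t : ℚ) = (#s).choose t * (#s - t : ℕ) := by
    rw [h₁]
    exact_mod_cast Nat.choose_succ_right_eq (#s) t
  have : (t + 1 : ℕ) ≠ (0 : ℚ) := by positivity
  have : (#s - t : ℕ) ≠ (0 : ℚ) := by exact_mod_cast (Nat.sub_pos_of_lt ht).ne'
  have : ((#s).choose t : ℚ) ≠ 0 := by exact_mod_cast (Nat.choose_pos ht.le).ne'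
  have : ((#s).choose (t + 1) : ℚ) ≠ 0 := by exact_mod_cast (Nat.choose_pos ht).ne'
  simp only [sum_sub_distrib, sum_sum_powersetCard_erase_insert, sum_sum_powersetCard_erase,
    nsmul_eq_mul, sub_div]
  congr 1
  · rw [h₁]
    field_simp
  · rw [h₂]
    field_simp

section AlternatingSums

def altSum (g : ℕ → ℚ) (j : ℕ) : ℚ := ∑ i ∈ range (j + 1), (-1 : ℚ) ^ (j - i) * g i

theorem altSum_zero (g : ℕ → ℚ) : altSum g 0 = g 0 := by simp [altSum]

theorem altSum_succ (g : ℕ → ℚ) (j : ℕ) : altSum g (j + 1) = g (j + 1) - altSum g j := by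
  rw [altSum, sum_range_succ, Nat.sub_self, pow_zero, one_mul, altSum, sub_eq_neg_add,
    ← sum_neg_distrib]
  congr 1
  refine sum_congr rfl fun i hi => ?_
  rw [Nat.sub_add_comm (mem_range_succ_iff.1 hi), pow_succ]
  ring

theorem altSum_sub_sub_succ (c r : ℕ → ℚ) (hr : r 0 = 0) (j : ℕ) :
    altSum (fun i => c i - r i - r (i + 1)) j = altSum c j - r (j + 1) := by
  induction j with
  | zero => simp [altSum_zero, hr]
  | succ j ih => rw [altSum_succ, ih, altSum_succ]; ring

theorem le_of_forall_altSum_le {a b : ℕ → ℚ} (h : ∀ j, altSum a j ≤ altSum b j) (j : ℕ) :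
    a j ≤ b j := by
  cases j with
  | zero => simpa [altSum_zero] using h 0
  | succ j => linarith [h j, h (j + 1), altSum_succ a j, altSum_succ b j]

end AlternatingSums

section Averages

variable {V : Type} [DecidableEq V]

noncomputable def subsetAverage (S : Finset V) : (Finset V → ℚ) →ₗ[ℚ] ℚ where
  toFun h := ∑ j ∈ range (S.card + 1), (1 / (S.card.choose j : ℚ)) * ∑ A ∈ S.powersetCard j, h A
  map_add' h h' := by simp only [Pi.add_apply, sum_add_distrib, mul_add]
  map_smul' c h := by
    simp only [Pi.smul_apply, smul_eq_mul, mul_sum, RingHom.id_apply]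
    exact sum_congr rfl fun _ _ => sum_congr rfl fun _ _ => by ring

/-- `pairAverage S g` is the expected value of `∑ x ∈ S, g x B(x)`, where `B(x)` is the set of
elements preceding `x` in a uniformly random ordering of `S`. -/
noncomputable def pairAverage (S : Finset V) : (V → Finset V → ℚ) →ₗ[ℚ] ℚ :=
  (1 / #S : ℚ) • ∑ x ∈ S, (subsetAverage (S.erase x)).comp (LinearMap.proj x)

theorem pairAverage_apply (S : Finset V) (g : V → Finset V → ℚ) :
    pairAverage S g = 1 / #S * ∑ x ∈ S, subsetAverage (S.erase x) (g x) := by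
  simp [pairAverage]

theorem pairAverage_insert_sub (S : Finset V) (φ : Finset V → ℚ) :
    pairAverage S (fun x B => φ (insert x B) - φ B) = φ S - φ ∅ := by
  rcases S.eq_empty_or_nonempty with rfl | hS
  · simp [pairAverage_apply]
  have hm : 0 < #S := hS.card_pos
  let level (k : ℕ) : ℚ := (∑ A ∈ powersetCard k S, φ A) / (#S).choose k
  calc pairAverage S (fun x B => φ (insert x B) - φ B)
      = ∑ t ∈ range #S, (∑ x ∈ S, ∑ B ∈ powersetCard t (S.erase x), (φ (insert x B) - φ B)) /
          (#S * (#S - 1).choose t) := by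
        rw [pairAverage_apply]
        simp only [subsetAverage, LinearMap.coe_mk, AddHom.coe_mk]
        rw [sum_congr rfl fun x hx => by rw [card_erase_of_mem hx, Nat.sub_add_cancel hm],
          sum_comm, mul_sum]
        refine sum_congr rfl fun t _ => ?_
        rw [← mul_sum]
        ring
    _ = ∑ t ∈ range #S, (level (t + 1) - level t) :=
        sum_congr rfl fun t ht => sum_sum_powersetCard_erase_insert_sub S φ (mem_range.1 ht)
    _ = φ S - φ ∅ := by
        rw [sum_range_sub level]
        simp [level, powersetCard_self]

theorem pairAverage_mono {S : Finset V} {g g' : V → Finset V → ℚ}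
    (h : ∀ x ∈ S, ∀ B ⊆ S.erase x, g x B ≤ g' x B) : pairAverage S g ≤ pairAverage S g' := by
  simp only [pairAverage_apply, subsetAverage, LinearMap.coe_mk, AddHom.coe_mk]
  gcongr with x hx j _ B hB
  exact h x hx B (mem_powersetCard.1 hB).1

theorem pairAverage_congr {S : Finset V} {g g' : V → Finset V → ℚ}
    (h : ∀ x ∈ S, ∀ B ⊆ S.erase x, g x B = g' x B) : pairAverage S g = pairAverage S g' :=
  (pairAverage_mono fun x hx B hB => (h x hx B hB).le).antisymm
    (pairAverage_mono fun x hx B hB => (h x hx B hB).ge)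

theorem pairAverage_ite_empty {S : Finset V} (hS : S.Nonempty) :
    pairAverage S (fun _ B => if B = ∅ then 1 else 0) = 1 := by
  have h := pairAverage_insert_sub S (fun A => if A = ∅ then 0 else 1)
  simp only [insert_ne_empty, if_false, hS.ne_empty, if_true, sub_zero] at h
  convert h using 4 with x B
  split_ifs <;> norm_num

theorem pairAverage_altSum (S : Finset V) (g : ℕ → V → Finset V → ℚ) (j : ℕ) :
    pairAverage S (fun x B => altSum (fun i => g i x B) j) =
      altSum (fun i => pairAverage S (g i)) j := by
  have : (fun x B => altSum (fun i => g i x B) j) =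
      ∑ i ∈ range (j + 1), (-1 : ℚ) ^ (j - i) • g i := by
    ext x B
    simp [altSum, Finset.sum_apply]
  rw [this, map_sum]
  simp [altSum]

end Averages

section LinearAlgebra

open Module LinearMap

variable {K M M' N N' : Type*} [Field K] [AddCommGroup M] [Module K M] [AddCommGroup M']
  [Module K M'] [AddCommGroup N] [Module K N] [AddCommGroup N'] [Module K N']

/-- Rank of a block upper-triangular map: `f ∘ e` and `p ∘ f` play the diagonal blocks. -/
theorem LinearMap.finrank_range_comp_add_finrank_range_comp_le [FiniteDimensional K N]
    (f : M →ₗ[K] N) (e : M' →ₗ[K] M) (p : N →ₗ[K] N') (h : p ∘ₗ f ∘ₗ e = 0) :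
    finrank K (range (f ∘ₗ e)) + finrank K (range (p ∘ₗ f)) ≤ finrank K (range f) := by
  let g := p ∘ₗ (range f).subtype
  have h_range : range (p ∘ₗ f) = range g := by
    rw [← range_comp_of_range_eq_top g (range_rangeRestrict f)]
    rfl
  have h_ker : finrank K (range (f ∘ₗ e)) ≤ finrank K (ker g) := by
    have : range (f ∘ₗ e) = (range (f.rangeRestrict ∘ₗ e)).map (range f).subtype := by
      rw [← range_comp]
      rfl
    rw [this, Submodule.finrank_map_subtype_eq]
    exact Submodule.finrank_mono (range_le_ker_iff.2 h)
  rw [h_range, ← g.finrank_range_add_finrank_ker]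
  omega

theorem LinearMap.finrank_range_eq_of_comp_eq [FiniteDimensional K N] (f : M →ₗ[K] N)
    (g : M' →ₗ[K] N') (eM : M ≃ₗ[K] M') (eN : N ≃ₗ[K] N') (h : g ∘ₗ eM = eN ∘ₗ f) :
    finrank K (range g) = finrank K (range f) := by
  rw [← range_comp_of_range_eq_top g eM.range, h, range_comp]
  exact LinearEquiv.finrank_map_eq eN _

end LinearAlgebra

namespace SC

open Module

section Faces

variable {V : Type} {K L : SC V} {s : Finset V} {n : ℕ}

theorem mem_cf : s ∈ K.cf n ↔ s ∈ K.faces ∧ #s = n := mem_filter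

theorem cf_subset_cf (h : L.faces ⊆ K.faces) (n : ℕ) : L.cf n ⊆ K.cf n :=
  fun _ hs => mem_cf.2 ⟨h (mem_cf.1 hs).1, (mem_cf.1 hs).2⟩

theorem cf_eq_empty_of_dimIs {d : ℕ} (hd : K.dimIs d) : K.cf (d + 2) = ∅ :=
  eq_empty_of_forall_notMem fun s hs => by
    have := hd.2 s (mem_cf.1 hs).1
    have := (mem_cf.1 hs).2
    omega

end Faces

variable {V : Type} [LinearOrder V]

section Subcomplexes

variable {K L : SC V} {s : Finset V}

theorem mem_rcf {n : ℕ} : s ∈ K.rcf L n ↔ (s ∈ K.faces ∧ #s = n) ∧ s ∉ L.faces := by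
  rw [rcf, mem_filter, mem_cf]

theorem mem_ind_faces {A : Finset V} : s ∈ (K.ind A).faces ↔ s ∈ K.faces ∧ s ⊆ A := mem_filter

theorem mem_verts {x : V} : x ∈ K.verts ↔ ∃ s ∈ K.faces, x ∈ s := by
  simp [verts, mem_sup]

theorem subset_verts_of_mem_faces (hs : s ∈ K.faces) : s ⊆ K.verts :=
  fun _ hx => mem_verts.2 ⟨s, hs, hx⟩

theorem card_rcf (h : L.faces ⊆ K.faces) (n : ℕ) :
    (#(K.rcf L n) : ℚ) = #(K.cf n) - #(L.cf n) := by
  have : (K.cf n).filter (· ∈ L.faces) = L.cf n := by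
    ext s
    simp only [mem_filter, mem_cf]
    exact ⟨fun hs => ⟨hs.2, hs.1.2⟩, fun hs => ⟨⟨h hs.1, hs.2⟩, hs.1⟩⟩
  rw [eq_sub_iff_add_eq, ← this, rcf, add_comm]
  exact_mod_cast card_filter_add_card_filter_not _

variable (K) {A A' : Finset V}

theorem ind_faces_subset_ind_faces (h : A ⊆ A') : (K.ind A).faces ⊆ (K.ind A').faces :=
  fun _ hs => mem_ind_faces.2 ⟨(mem_ind_faces.1 hs).1, (mem_ind_faces.1 hs).2.trans h⟩

theorem cf_ind_subset (A : Finset V) (n : ℕ) : (K.ind A).cf n ⊆ K.cf n :=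
  cf_subset_cf (filter_subset _ _) n

theorem ind_verts : K.ind K.verts = K := by
  obtain ⟨faces, down_closed⟩ := K
  simp only [ind, mk.injEq]
  exact filter_true_of_mem fun s hs => subset_verts_of_mem_faces (K := ⟨faces, down_closed⟩) hs

theorem cf_ind_empty {n : ℕ} (hn : n ≠ 0) : (K.ind ∅).cf n = ∅ :=
  eq_empty_of_forall_notMem fun s hs => by
    obtain ⟨hs, hcard⟩ := mem_cf.1 hs
    rw [subset_empty.1 (mem_ind_faces.1 hs).2, card_empty] at hcard
    exact hn hcard.symm

end Subcomplexes

section BoundaryMaps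

variable (F : Type) [Field F]

theorem bd_single (A B : Finset (Finset V)) (s : {s // s ∈ A}) (c : F) (t : {t // t ∈ B}) :
    bd F A B (Pi.single s c) t = coeff F s.1 t.1 * c := by
  simp [bd, Pi.single_apply]

theorem bd_eq_zero {A B : Finset (Finset V)} (h : ∀ s ∈ A, ∀ t ∈ B, coeff F s t = 0) :
    bd F A B = 0 :=
  LinearMap.pi_ext fun s c => funext fun t => by simp [bd_single, h s.1 s.2 t.1 t.2]

theorem finrank_range_bd_pos {A B : Finset (Finset V)} {s t : Finset V} (hs : s ∈ A) (ht : t ∈ B)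
    (h : coeff F s t ≠ 0) : 0 < finrank F (LinearMap.range (bd F A B)) := by
  refine Nat.pos_of_ne_zero fun h0 => h ?_
  have := LinearMap.ext_iff.1 (LinearMap.range_eq_bot.1 (Submodule.finrank_eq_zero.1 h0))
    (Pi.single ⟨s, hs⟩ 1)
  simpa [bd_single] using congrFun this ⟨t, ht⟩

theorem funLeft_comp_bd_comp_extendByZero {A₁ A B₁ B : Finset (Finset V)} (hA : A₁ ⊆ A)
    (hB : B₁ ⊆ B) :
    LinearMap.funLeft F F (Finset.inclusion hB) ∘ₗ bd F A B ∘ₗ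
      Function.ExtendByZero.linearMap F (Finset.inclusion hA) = bd F A₁ B₁ := by
  refine LinearMap.pi_ext fun s c => funext fun t => ?_
  have h_extend : Function.extend (Finset.inclusion hA) (Pi.single s c) 0 =
      Pi.single (Finset.inclusion hA s) c := by
    ext u
    by_cases hu : ∃ s', Finset.inclusion hA s' = u
    · obtain ⟨s', rfl⟩ := hu
      simp [(Finset.inclusion_injective hA).extend_apply, Pi.single_apply,
        (Finset.inclusion_injective hA).eq_iff]
    · rw [Function.extend_apply' _ _ _ hu, Pi.single_eq_of_ne fun h => hu ⟨s, h.symm⟩]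
      rfl
  change bd F A B (Function.extend (Finset.inclusion hA) (Pi.single s c) 0)
    (Finset.inclusion hB t) = bd F A₁ B₁ (Pi.single s c) t
  rw [h_extend, bd_single, bd_single]
  rfl

theorem finrank_range_bd_add_finrank_range_bd_le {A₁ A₂ A B₁ B₂ B : Finset (Finset V)}
    (hA₁ : A₁ ⊆ A) (hA₂ : A₂ ⊆ A) (hB₁ : B₁ ⊆ B) (hB₂ : B₂ ⊆ B)
    (h : ∀ s ∈ A₁, ∀ t ∈ B₂, coeff F s t = 0) :
    finrank F (LinearMap.range (bd F A₁ B₁)) + finrank F (LinearMap.range (bd F A₂ B₂)) ≤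
      finrank F (LinearMap.range (bd F A B)) := by
  let extend₁ := Function.ExtendByZero.linearMap F (Finset.inclusion hA₁)
  let restrict₂ := LinearMap.funLeft F F (Finset.inclusion hB₂)
  have h₁ : finrank F (LinearMap.range (bd F A₁ B₁)) ≤
      finrank F (LinearMap.range (bd F A B ∘ₗ extend₁)) := by
    rw [← funLeft_comp_bd_comp_extendByZero F hA₁ hB₁, LinearMap.range_comp]
    exact Submodule.finrank_map_le _ _
  have h₂ : finrank F (LinearMap.range (bd F A₂ B₂)) ≤
      finrank F (LinearMap.range (restrict₂ ∘ₗ bd F A B)) := by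
    rw [← funLeft_comp_bd_comp_extendByZero F hA₂ hB₂, ← LinearMap.comp_assoc]
    exact Submodule.finrank_mono (LinearMap.range_comp_le_range _ _)
  have h₀ : restrict₂ ∘ₗ bd F A B ∘ₗ extend₁ = 0 := by
    rw [funLeft_comp_bd_comp_extendByZero F hA₁ hB₂, bd_eq_zero F h]
  have := LinearMap.finrank_range_comp_add_finrank_range_comp_le (bd F A B) extend₁ restrict₂ h₀
  omega

theorem finrank_range_bd_eq_of_coeff_eq {A B A' B' : Finset (Finset V)} (eA : A ≃ A')
    (eB : B ≃ B') (εA εB : Finset V → F) (hεA : ∀ s, εA s ≠ 0) (hεB : ∀ t, εB t ≠ 0)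
    (h : ∀ (s : A) (t : B), coeff F (eA s).1 (eB t).1 = εA s * εB t * coeff F s.1 t.1) :
    finrank F (LinearMap.range (bd F A' B')) = finrank F (LinearMap.range (bd F A B)) := by
  let TA : (A → F) ≃ₗ[F] (A' → F) :=
    LinearEquiv.piCongrRight (fun s => LinearEquiv.smulOfNeZero F F _ (inv_ne_zero (hεA s))) ≪≫ₗ
      LinearEquiv.funCongrLeft F F eA.symm
  let TB : (B → F) ≃ₗ[F] (B' → F) :=
    LinearEquiv.piCongrRight (fun t => LinearEquiv.smulOfNeZero F F _ (hεB t)) ≪≫ₗ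
      LinearEquiv.funCongrLeft F F eB.symm
  refine LinearMap.finrank_range_eq_of_comp_eq _ _ TA TB ?_
  refine LinearMap.pi_ext fun s c => funext fun t' => ?_
  obtain ⟨t, rfl⟩ := eB.surjective t'
  have hTA : TA (Pi.single s c) = Pi.single (eA s) ((εA s)⁻¹ * c) := by
    ext s'
    obtain ⟨s', rfl⟩ := eA.surjective s'
    by_cases hs : s' = s
    · subst hs
      simp [TA]
    · simp [TA, hs]
  have hTB (f : B → F) : TB f (eB t) = εB t * f t := by simp [TB]
  simp only [LinearMap.comp_apply, LinearEquiv.coe_coe, hTA, hTB, bd_single, h]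
  field_simp [hεA s]

theorem coeff_insert_self {v : V} {t : Finset V} (hv : v ∉ t) :
    coeff F (insert v t) t = (-1) ^ #(t.filter (· < v)) := by
  rw [coeff, if_pos (subset_insert v t), insert_sdiff_cancel hv, sum_singleton]

theorem coeff_insert_insert {x : V} {s t : Finset V} (hxs : x ∉ s) (hxt : x ∉ t)
    (hst : #s = #t + 1) :
    coeff F (insert x s) (insert x t) =
      -((-1) ^ #(s.filter (· < x)) * (-1) ^ #(t.filter (· < x))) * coeff F s t := by
  by_cases hts : t ⊆ s
  · obtain ⟨v, hvt, rfl⟩ := exists_eq_insert_iff.2 ⟨hts, hst.symm⟩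
    have hvx : v ≠ x := fun h => hxs (h ▸ mem_insert_self v t)
    have hv : v ∉ insert x t := by simp [hvx, hvt]
    rw [insert_comm, coeff_insert_self F hv, coeff_insert_self F hvt, card_filter_lt_insert hxt,
      card_filter_lt_insert hvt]
    rcases hvx.lt_or_gt with h | h <;> simp [h, h.not_gt, pow_succ, ← mul_pow]
  · have : ¬ insert x t ⊆ insert x s := fun h =>
      hts fun u hu => (mem_insert.1 (h (mem_insert_of_mem hu))).resolve_left (by grind)
    rw [coeff, if_neg this, coeff, if_neg hts, mul_zero]

end BoundaryMaps

section Homology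

variable (F : Type) [Field F] {K L : SC V} {n : ℕ}

noncomputable def rankD (K : SC V) (n : ℕ) : ℕ := finrank F (LinearMap.range (D F K n))

noncomputable def rankRelD (K L : SC V) (n : ℕ) : ℕ :=
  finrank F (LinearMap.range (relD F K L n))

theorem rankD_zero (K : SC V) : rankD F K 0 = 0 := by
  rw [rankD, D, LinearMap.range_zero, finrank_bot]

theorem rankRelD_zero (K L : SC V) : rankRelD F K L 0 = 0 := by
  rw [rankRelD, relD, LinearMap.range_zero, finrank_bot]

theorem betti_eq (K : SC V) (n : ℕ) :
    betti F K n = #(K.cf (n + 1)) - rankD F K n - rankD F K (n + 1) := by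
  have := (D F K n).finrank_range_add_finrank_ker
  rw [Module.finrank_pi, Fintype.card_coe] at this
  simp only [betti, rankD]
  omega

theorem relBetti_eq (K L : SC V) (n : ℕ) :
    relBetti F K L n = #(K.rcf L (n + 1)) - rankRelD F K L n - rankRelD F K L (n + 1) := by
  have := (relD F K L n).finrank_range_add_finrank_ker
  rw [Module.finrank_pi, Fintype.card_coe] at this
  simp only [relBetti, rankRelD]
  omega

theorem altSum_betti (K : SC V) (j : ℕ) :
    altSum (fun i => (betti F K i : ℚ)) j =
      altSum (fun i => (#(K.cf (i + 1)) : ℚ)) j - rankD F K (j + 1) := by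
  rw [← altSum_sub_sub_succ _ (fun i => (rankD F K i : ℚ)) (by simp [rankD_zero])]
  simp [betti_eq]

theorem altSum_relBetti (K L : SC V) (j : ℕ) :
    altSum (fun i => (relBetti F K L i : ℚ)) j =
      altSum (fun i => (#(K.rcf L (i + 1)) : ℚ)) j - rankRelD F K L (j + 1) := by
  rw [← altSum_sub_sub_succ _ (fun i => (rankRelD F K L i : ℚ)) (by simp [rankRelD_zero])]
  simp [relBetti_eq]

theorem rankD_add_rankRelD_le (h : L.faces ⊆ K.faces) (n : ℕ) :
    rankD F L (n + 1) + rankRelD F K L (n + 1) ≤ rankD F K (n + 1) := by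
  refine finrank_range_bd_add_finrank_range_bd_le F (cf_subset_cf h _) (filter_subset _ _)
    (cf_subset_cf h _) (filter_subset _ _) fun s hs t ht => ?_
  have ht_sub : ¬ t ⊆ s := fun hts => (mem_rcf.1 ht).2 (L.down_closed s (mem_cf.1 hs).1 t hts)
  rw [coeff, if_neg ht_sub]

theorem rankD_succ_eq_zero (h : K.cf (n + 2) = ∅) : rankD F K (n + 1) = 0 := by
  rw [rankD, show D F K (n + 1) = 0 from bd_eq_zero F (by simp [h]), LinearMap.range_zero,
    finrank_bot]

theorem rankRelD_succ_eq_zero (h : K.cf (n + 2) = ∅) : rankRelD F K L (n + 1) = 0 := by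
  have : K.rcf L (n + 2) = ∅ := subset_empty.1 (h ▸ filter_subset _ _)
  rw [rankRelD, show relD F K L (n + 1) = 0 from bd_eq_zero F (by simp [this]),
    LinearMap.range_zero, finrank_bot]

end Homology

section Links

variable {X : SC V} {x : V} {B s : Finset V} {n : ℕ}

theorem mem_lk_faces : s ∈ (X.lk x).faces ↔ x ∉ s ∧ insert x s ∈ X.faces := by
  simp only [lk, mem_image, mem_filter]
  constructor
  · rintro ⟨u, ⟨hu, hxu⟩, rfl⟩
    exact ⟨notMem_erase x u, by rwa [insert_erase hxu]⟩
  · rintro ⟨hxs, hs⟩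
    exact ⟨insert x s, ⟨hs, mem_insert_self x s⟩, erase_insert hxs⟩

theorem mem_cf_ind_lk :
    s ∈ ((X.lk x).ind B).cf n ↔ x ∉ s ∧ insert x s ∈ X.faces ∧ s ⊆ B ∧ #s = n := by
  simp only [mem_cf, mem_ind_faces, mem_lk_faces, and_assoc]

theorem mem_rcf_ind_insert (hxB : x ∉ B) :
    s ∈ (X.ind (insert x B)).rcf (X.ind B) n ↔ s ∈ X.faces ∧ #s = n ∧ x ∈ s ∧ s.erase x ⊆ B := by
  simp only [mem_rcf, mem_ind_faces, ← subset_insert_iff]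
  constructor
  · rintro ⟨⟨⟨hs, hsB⟩, hcard⟩, hnot⟩
    refine ⟨hs, hcard, ?_, hsB⟩
    by_contra hxs
    exact hnot ⟨hs, (subset_insert_iff_of_notMem hxs).1 hsB⟩
  · rintro ⟨hs, hcard, hxs, hsB⟩
    exact ⟨⟨⟨hs, hsB⟩, hcard⟩, fun h => hxB (h.2 hxs)⟩

theorem lk_verts (h2 : X.Neighbourly 2) (hx : x ∈ X.verts) : (X.lk x).verts = X.verts.erase x := by
  ext y
  rw [mem_verts, mem_erase]
  simp only [mem_lk_faces]
  constructor
  · rintro ⟨s, ⟨hxs, hs⟩, hys⟩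
    exact ⟨fun h => hxs (h ▸ hys), subset_verts_of_mem_faces hs (mem_insert_of_mem hys)⟩
  · rintro ⟨hyx, hy⟩
    refine ⟨{y}, ⟨by simpa using hyx.symm, h2 _ ?_ (card_pair hyx.symm)⟩, mem_singleton_self y⟩
    simpa [insert_subset_iff] using ⟨hx, hy⟩

variable (X x B) in
def linkEquiv (hxB : x ∉ B) (n : ℕ) :
    ((X.lk x).ind B).cf n ≃ (X.ind (insert x B)).rcf (X.ind B) (n + 1) where
  toFun s := ⟨insert x s.1, by
    obtain ⟨hxs, hs, hsB, hcard⟩ := mem_cf_ind_lk.1 s.2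
    exact (mem_rcf_ind_insert hxB).2 ⟨hs, by rw [card_insert_of_notMem hxs, hcard],
      mem_insert_self x _, by rwa [erase_insert hxs]⟩⟩
  invFun s := ⟨s.1.erase x, by
    obtain ⟨hs, hcard, hxs, hsB⟩ := (mem_rcf_ind_insert hxB).1 s.2
    exact mem_cf_ind_lk.2 ⟨notMem_erase x _, by rwa [insert_erase hxs], hsB,
      by rw [card_erase_of_mem hxs, hcard, Nat.add_sub_cancel]⟩⟩
  left_inv s := Subtype.ext (erase_insert (mem_cf_ind_lk.1 s.2).1)
  right_inv s := Subtype.ext (insert_erase ((mem_rcf_ind_insert hxB).1 s.2).2.2.1)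

theorem card_rcf_ind_insert (hxB : x ∉ B) (n : ℕ) :
    #((X.ind (insert x B)).rcf (X.ind B) (n + 1)) = #(((X.lk x).ind B).cf n) := by
  simpa using (Fintype.card_congr (linkEquiv X x B hxB n)).symm

theorem rcf_ind_insert_one (hx : x ∈ X.verts) (hxB : x ∉ B) :
    (X.ind (insert x B)).rcf (X.ind B) 1 = {{x}} := by
  ext s
  rw [mem_rcf_ind_insert hxB, mem_singleton]
  constructor
  · rintro ⟨-, hcard, hxs, -⟩
    obtain ⟨a, rfl⟩ := card_eq_one.1 hcard
    rw [mem_singleton.1 hxs]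
  · rintro rfl
    obtain ⟨s, hs, hxs⟩ := mem_verts.1 hx
    exact ⟨X.down_closed s hs _ (singleton_subset_iff.2 hxs), card_singleton x,
      mem_singleton_self x, by simp⟩

variable (F : Type) [Field F]

theorem rankRelD_ind_insert (hxB : x ∉ B) (n : ℕ) :
    rankRelD F (X.ind (insert x B)) (X.ind B) (n + 2) = rankD F ((X.lk x).ind B) (n + 1) := by
  refine finrank_range_bd_eq_of_coeff_eq F (linkEquiv X x B hxB (n + 2))
    (linkEquiv X x B hxB (n + 1)) (fun s => (-1) ^ #(s.filter (· < x)))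
    (fun t => -(-1) ^ #(t.filter (· < x))) (fun _ => by simp) (fun _ => by simp) fun s t => ?_
  obtain ⟨hxs, -, -, hs⟩ := mem_cf_ind_lk.1 s.2
  obtain ⟨hxt, -, -, ht⟩ := mem_cf_ind_lk.1 t.2
  exact (coeff_insert_insert F hxs hxt (by omega)).trans (by ring)

theorem rankRelD_ind_insert_one (h2 : X.Neighbourly 2) (hx : x ∈ X.verts)
    (hB : B ⊆ X.verts.erase x) :
    rankRelD F (X.ind (insert x B)) (X.ind B) 1 = if B = ∅ then 0 else 1 := by
  have hxB : x ∉ B := fun h => (mem_erase.1 (hB h)).1 rfl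
  split_ifs with hB₀
  · subst hB₀
    refine rankRelD_succ_eq_zero F (n := 0) (eq_empty_of_forall_notMem fun s hs => ?_)
    obtain ⟨hs, hcard⟩ := mem_cf.1 hs
    have := card_le_card (mem_ind_faces.1 hs).2
    simp_all
  · obtain ⟨y, hy⟩ := nonempty_iff_ne_empty.2 hB₀
    have hxy : x ≠ y := fun h => hxB (h ▸ hy)
    have h_edge : {x, y} ∈ (X.ind (insert x B)).rcf (X.ind B) 2 := by
      refine (mem_rcf_ind_insert hxB).2 ⟨h2 _ ?_ (card_pair hxy), card_pair hxy,
        mem_insert_self x _, by simpa [erase_insert (notMem_singleton.2 hxy)] using hy⟩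
      simpa [insert_subset_iff] using ⟨hx, mem_of_mem_erase (hB hy)⟩
    have h_coeff : coeff F {x, y} {x} ≠ 0 := by
      rw [pair_comm, coeff_insert_self F (notMem_singleton.2 hxy.symm)]
      exact pow_ne_zero _ (neg_ne_zero.2 one_ne_zero)
    refine le_antisymm ?_ (finrank_range_bd_pos F h_edge ?_ h_coeff)
    · calc rankRelD F _ _ 1 ≤ #((X.ind (insert x B)).rcf (X.ind B) 1) :=
            (Submodule.finrank_le (LinearMap.range (relD F _ _ 1))).trans_eq (by simp)
        _ = 1 := by rw [rcf_ind_insert_one hx hxB, card_singleton]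
    · rw [rcf_ind_insert_one hx hxB]
      exact mem_singleton_self _

theorem relBetti_ind_insert_zero (h2 : X.Neighbourly 2) (hx : x ∈ X.verts)
    (hB : B ⊆ X.verts.erase x) :
    relBetti F (X.ind (insert x B)) (X.ind B) 0 = if B = ∅ then 1 else 0 := by
  have hxB : x ∉ B := fun h => (mem_erase.1 (hB h)).1 rfl
  rw [relBetti_eq, rankRelD_zero, zero_add, rankRelD_ind_insert_one F h2 hx hB,
    rcf_ind_insert_one hx hxB, card_singleton]
  split_ifs <;> rfl

/-- The correction at `B = ∅` comes from the convention `rbetti F {∅} 0 = -1` (rather than a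
reduced Betti number in degree `-1`). -/
theorem relBetti_ind_insert_succ (h2 : X.Neighbourly 2) (hx : x ∈ X.verts)
    (hB : B ⊆ X.verts.erase x) (i : ℕ) :
    relBetti F (X.ind (insert x B)) (X.ind B) (i + 1) =
      rbetti F ((X.lk x).ind B) i + if i = 0 ∧ B = ∅ then 1 else 0 := by
  have hxB : x ∉ B := fun h => (mem_erase.1 (hB h)).1 rfl
  rw [relBetti_eq, card_rcf_ind_insert hxB, rbetti, betti_eq]
  rcases i with _ | i
  · rw [rankRelD_ind_insert_one F h2 hx hB, rankRelD_ind_insert F hxB 0, rankD_zero]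
    by_cases hB₀ : B = ∅
    · simp only [hB₀, if_true, and_self]
      ring
    · simp only [hB₀, if_false, and_false, if_true]
      ring
  · rw [rankRelD_ind_insert F hxB i, rankRelD_ind_insert F hxB (i + 1)]
    simp

end Links

section MorseInequalities

variable (F : Type) [Field F] {X : SC V}

theorem mu_eq_pairAverage_relBetti (h2 : X.Neighbourly 2) (hX : X.verts.Nonempty) (i : ℕ) :
    mu F X i = pairAverage X.verts fun x B => (relBetti F (X.ind (insert x B)) (X.ind B) i : ℚ) := by
  rcases i with _ | i
  · calc mu F X 0 = 1 := by simp [mu]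
      _ = pairAverage X.verts fun _ B => if B = ∅ then 1 else 0 := (pairAverage_ite_empty hX).symm
      _ = _ := pairAverage_congr fun x hx B hB => by
          rw [relBetti_ind_insert_zero F h2 hx hB]
          push_cast
          rfl
  · have h_sigma : ∀ x ∈ X.verts, sigma F (X.lk x) i =
        subsetAverage (X.verts.erase x) fun B => (rbetti F ((X.lk x).ind B) i : ℚ) := by
      intro x hx
      rw [← lk_verts h2 hx]
      rfl
    calc mu F X (i + 1)
        = pairAverage X.verts (fun x B => (rbetti F ((X.lk x).ind B) i : ℚ)) +
            (if i = 0 then 1 else 0) * pairAverage X.verts (fun _ B => if B = ∅ then 1 else 0) := by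
          rw [pairAverage_ite_empty hX, pairAverage_apply, mu, if_neg i.succ_ne_zero,
            Nat.add_sub_cancel, sum_congr rfl h_sigma, mul_one, add_comm]
          simp only [Nat.add_eq_right]
      _ = pairAverage X.verts ((fun x B => (rbetti F ((X.lk x).ind B) i : ℚ)) +
            (if i = 0 then 1 else 0 : ℚ) • fun _ B => if B = ∅ then 1 else 0) := by
          rw [map_add, map_smul, smul_eq_mul]
      _ = _ := pairAverage_congr fun x hx B hB => by
          rw [relBetti_ind_insert_succ F h2 hx hB]
          split_ifs <;> simp_all

theorem pairAverage_card_rcf {n : ℕ} (hn : n ≠ 0) :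
    pairAverage X.verts (fun x B => (#((X.ind (insert x B)).rcf (X.ind B) n) : ℚ)) =
      #(X.cf n) := by
  have : (fun x B => (#((X.ind (insert x B)).rcf (X.ind B) n) : ℚ)) =
      fun x B => (#((X.ind (insert x B)).cf n) : ℚ) - #((X.ind B).cf n) := by
    ext x B
    exact card_rcf (ind_faces_subset_ind_faces X (subset_insert x B)) n
  rw [this, pairAverage_insert_sub X.verts fun A => (#((X.ind A).cf n) : ℚ), ind_verts,
    cf_ind_empty X hn, card_empty, Nat.cast_zero, sub_zero]

theorem pairAverage_rankRelD_le (j : ℕ) :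
    pairAverage X.verts (fun x B => (rankRelD F (X.ind (insert x B)) (X.ind B) (j + 1) : ℚ)) ≤
      rankD F X (j + 1) := by
  calc _ ≤ pairAverage X.verts fun x B =>
          (rankD F (X.ind (insert x B)) (j + 1) : ℚ) - rankD F (X.ind B) (j + 1) :=
        pairAverage_mono fun x _ B _ => by
          have := rankD_add_rankRelD_le F (ind_faces_subset_ind_faces X (subset_insert x B)) j
          rw [le_sub_iff_add_le']
          exact_mod_cast this
    _ = rankD F X (j + 1) := by
        rw [pairAverage_insert_sub X.verts fun A => (rankD F (X.ind A) (j + 1) : ℚ), ind_verts,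
          rankD_succ_eq_zero F (cf_ind_empty X (by omega)), Nat.cast_zero, sub_zero]

theorem altSum_mu (h2 : X.Neighbourly 2) (hX : X.verts.Nonempty) (j : ℕ) :
    altSum (mu F X) j = altSum (fun i => (#(X.cf (i + 1)) : ℚ)) j -
      pairAverage X.verts (fun x B => (rankRelD F (X.ind (insert x B)) (X.ind B) (j + 1) : ℚ)) := by
  calc altSum (mu F X) j
      = pairAverage X.verts (fun x B =>
          altSum (fun i => (relBetti F (X.ind (insert x B)) (X.ind B) i : ℚ)) j) := by
        rw [pairAverage_altSum]
        exact congrArg₂ _ (funext (mu_eq_pairAverage_relBetti F h2 hX)) rfl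
    _ = pairAverage X.verts ((fun x B =>
          altSum (fun i => (#((X.ind (insert x B)).rcf (X.ind B) (i + 1)) : ℚ)) j) -
          fun x B => (rankRelD F (X.ind (insert x B)) (X.ind B) (j + 1) : ℚ)) := by
        simp_rw [altSum_relBetti]
        rfl
    _ = _ := by
        rw [map_sub, pairAverage_altSum]
        simp_rw [pairAverage_card_rcf (X := X) (Nat.succ_ne_zero _)]

end MorseInequalities

end SC

/-- Theorem 2.6 (a), (b): for a `2`-neighbourly `d`-dimensional simplicial complex, the
strong Morse inequalities `∑_{i=0}^{j} (-1)^{j-i} μ_i ≥ ∑_{i=0}^{j} (-1)^{j-i} β_i`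
(for `0 ≤ j ≤ d`, with equality for `j = d`) and the weak Morse inequalities
`μ_j ≥ β_j` hold. -/
theorem morse_inequalities {V : Type} [LinearOrder V] (F : Type) [Field F]
    (d : ℕ) (X : SC V) (hd : X.dimIs d) (h2 : X.Neighbourly 2) :
    (∀ j ≤ d, ∑ i ∈ Finset.range (j + 1), (-1 : ℚ) ^ (j - i) * (SC.betti F X i : ℚ) ≤
      ∑ i ∈ Finset.range (j + 1), (-1 : ℚ) ^ (j - i) * SC.mu F X i) ∧
    (∑ i ∈ Finset.range (d + 1), (-1 : ℚ) ^ (d - i) * SC.mu F X i =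
      ∑ i ∈ Finset.range (d + 1), (-1 : ℚ) ^ (d - i) * (SC.betti F X i : ℚ)) ∧
    (∀ j ≤ d, (SC.betti F X j : ℚ) ≤ SC.mu F X j) := by
  have hX : X.verts.Nonempty := by
    obtain ⟨s, hs, hcard⟩ := hd.1
    obtain ⟨x, hx⟩ := card_pos.1 (by omega : 0 < #s)
    exact ⟨x, SC.subset_verts_of_mem_faces hs hx⟩
  have strong (j : ℕ) : altSum (fun i => (SC.betti F X i : ℚ)) j ≤ altSum (SC.mu F X) j := by
    rw [SC.altSum_betti, SC.altSum_mu F h2 hX]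
    linarith [SC.pairAverage_rankRelD_le F (X := X) j]
  have top : pairAverage X.verts
      (fun x B => (SC.rankRelD F (X.ind (insert x B)) (X.ind B) (d + 1) : ℚ)) = 0 := by
    rw [pairAverage_congr fun x _ B _ => by rw [SC.rankRelD_succ_eq_zero F (subset_empty.1
      ((SC.cf_ind_subset X _ _).trans (SC.cf_eq_empty_of_dimIs hd).subset))], Nat.cast_zero]
    exact map_zero _
  refine ⟨fun j _ => strong j, ?_, fun j _ => le_of_forall_altSum_le strong j⟩
  change altSum (SC.mu F X) d = altSum (fun i => (SC.betti F X i : ℚ)) d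
  rw [SC.altSum_betti, SC.altSum_mu F h2 hX, top,
    SC.rankD_succ_eq_zero F (SC.cf_eq_empty_of_dimIs hd), Nat.cast_zero]
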